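/- arXiv:1012.1421 — 2 statements merged into one kernel-verified Lean document; each statement's English description precedes it below -/
import Mathlib

section
/- The linear functional ω(f) = ∫₀¹ f(x) dx on L^p([0,1]) with 1 ≤ p < 2 is not representable on the quasi *-algebra (L^p([0,1]), L^∞([0,1])): there exists f ∈ L^p([0,1]) such that no constant γ > 0 satisfies |∫₀¹ f(x)φ(x) dx| ≤ γ · ‖φ‖₂ for all φ ∈ L^∞([0,1]). -/
/-!
Take `f(x) = x^{-1/2}`, which lies in `L^p([0,1])` exactly for `p < 2`. Pairing any `g` with
`φ = 1_s · conj g`, for a set `s` on which `g` is bounded, gives `∫ g φ = ∫_s |g|² = ‖φ‖₂²`, so a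
bound `|∫ g φ| ≤ γ ‖φ‖₂` forces `∫_s |g|² ≤ γ²`. For `f` and `s = [ε, 1]` the left side is
`∫_ε^1 dx/x = -log ε`, which is unbounded as `ε → 0`.
-/

open MeasureTheory Set
open scoped ENNReal

theorem setIntegral_norm_sq_le_of_norm_integral_mul_le {α : Type*} [MeasurableSpace α]
    {μ : Measure α} [IsFiniteMeasure μ] {g : α → ℂ} {γ : ℝ}
    (h : ∀ φ : Lp ℂ ∞ μ, ‖∫ x, g x * (φ : α → ℂ) x ∂μ‖ ≤ γ * (eLpNorm (φ : α → ℂ) 2 μ).toReal)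
    {s : Set α} (hs : MeasurableSet s) (hg : MemLp g ∞ (μ.restrict s)) :
    ∫ x in s, ‖g x‖ ^ 2 ∂μ ≤ γ ^ 2 := by
  set I := ∫ x in s, ‖g x‖ ^ 2 ∂μ
  have hI0 : 0 ≤ I := setIntegral_nonneg hs fun x _ => sq_nonneg ‖g x‖
  have hφ : MemLp (s.indicator (star g)) ∞ μ := (memLp_indicator_iff_restrict hs).2 hg.star
  have hpair : ∫ x, g x * (hφ.toLp : α → ℂ) x ∂μ = I := by
    rw [integral_congr_ae (hφ.coeFn_toLp.mono fun x hx => congrArg (g x * ·) hx)]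
    have hmul (x : α) :
        g x * s.indicator (star g) x = s.indicator (fun x => ((‖g x‖ ^ 2 : ℝ) : ℂ)) x := by
      by_cases hx : x ∈ s
      · simp [hx, Complex.mul_conj']
      · simp [hx]
    simp_rw [hmul]
    rw [integral_indicator hs]
    exact integral_complex_ofReal
  have hnorm : (eLpNorm (hφ.toLp : α → ℂ) 2 μ).toReal = √I := by
    rw [eLpNorm_congr_ae hφ.coeFn_toLp, eLpNorm_indicator_eq_eLpNorm_restrict hs, eLpNorm_star,
      (hg.mono_exponent le_top).eLpNorm_eq_integral_rpow_norm two_ne_zero ENNReal.ofNat_ne_top,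
      ENNReal.toReal_ofReal (by positivity), Real.sqrt_eq_rpow]
    norm_num [I]
  have hI : I ≤ γ * √I := by
    simpa [hpair, hnorm, abs_of_nonneg hI0] using h hφ.toLp
  have hsq : √I ^ 2 = I := Real.sq_sqrt hI0
  nlinarith [Real.sqrt_nonneg I]

theorem memLp_rpow_Icc_zero_one {p : ℝ≥0∞} (hp0 : p ≠ 0) (hp : p ≠ ∞) {r : ℝ}
    (hr : -1 < r * p.toReal) : MemLp (fun x : ℝ => x ^ r) p (volume.restrict (Icc 0 1)) := by
  rw [← integrable_norm_rpow_iff (by fun_prop) hp0 hp, ← IntegrableOn,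
    integrableOn_Icc_iff_integrableOn_Ioo]
  refine ((intervalIntegral.integrableOn_Ioo_rpow_iff one_pos).2 hr).congr_fun
    (fun x hx => ?_) measurableSet_Ioo
  rw [Real.norm_of_nonneg (Real.rpow_nonneg hx.1.le r), ← Real.rpow_mul hx.1.le]

theorem memLp_top_rpow_Icc {μ : Measure ℝ} {ε b r : ℝ} (hε : 0 < ε) (hr : r ≤ 0) :
    MemLp (fun x : ℝ => x ^ r) ∞ (μ.restrict (Icc ε b)) :=
  memLp_top_of_bound (by fun_prop) (ε ^ r) <| ae_restrict_of_forall_mem measurableSet_Icc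
    fun x hx => by
      rw [Real.norm_of_nonneg (Real.rpow_nonneg (hε.le.trans hx.1) r)]
      exact Real.rpow_le_rpow_of_nonpos hε hx.1 hr

theorem norm_rpow_neg_half_sq {x : ℝ} (hx : 0 < x) :
    ‖((x ^ (-(1 / 2) : ℝ) : ℝ) : ℂ)‖ ^ 2 = x⁻¹ := by
  rw [Complex.norm_real, Real.norm_of_nonneg (Real.rpow_nonneg hx.le _), ← Real.rpow_natCast,
    ← Real.rpow_mul hx.le]
  norm_num [Real.rpow_neg_one]

theorem setIntegral_Icc_inv {ε : ℝ} (hε : 0 < ε) (hε1 : ε ≤ 1) :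
    ∫ x in Icc ε 1, x⁻¹ ∂(volume.restrict (Icc 0 1)) = -Real.log ε := by
  rw [Measure.restrict_restrict measurableSet_Icc, Icc_inter_Icc, max_eq_left hε.le, min_self,
    integral_Icc_eq_integral_Ioc, ← intervalIntegral.integral_of_le hε1,
    integral_inv_of_pos hε one_pos, one_div, Real.log_inv]

/-- on the quasi *-algebra `(L^p([0,1]), L^∞([0,1]))` with `1 ≤ p < 2`, the
linear functional `ω(f) = ∫₀¹ f` is not representable: there is `f ∈ L^p([0,1])` such that
no constant `γ > 0` satisfies `|∫₀¹ f φ| ≤ γ ‖φ‖₂` for all `φ ∈ L^∞([0,1])`. -/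
theorem stmt_3 (p : ℝ≥0∞) (hp1 : 1 ≤ p) (hp2 : p < 2) :
    ∃ f : Lp ℂ p (MeasureTheory.volume.restrict (Set.Icc (0 : ℝ) 1)),
      ¬ ∃ γ : ℝ, 0 < γ ∧
        ∀ φ : Lp ℂ ∞ (MeasureTheory.volume.restrict (Set.Icc (0 : ℝ) 1)),
          ‖∫ x, (f : ℝ → ℂ) x * (φ : ℝ → ℂ) x
              ∂(MeasureTheory.volume.restrict (Set.Icc (0 : ℝ) 1))‖ ≤
            γ * (eLpNorm (φ : ℝ → ℂ) 2 (MeasureTheory.volume.restrict (Set.Icc (0 : ℝ) 1))).toReal := by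
  have hp0 : p ≠ 0 := (one_pos.trans_le hp1).ne'
  have hp : p ≠ ∞ := (hp2.trans ENNReal.ofNat_lt_top).ne
  have hp2' : p.toReal < 2 := by
    simpa using (ENNReal.toReal_lt_toReal hp ENNReal.ofNat_ne_top).2 hp2
  set g : ℝ → ℂ := fun x => ((x ^ (-(1 / 2) : ℝ) : ℝ) : ℂ)
  have hg : MemLp g p (volume.restrict (Icc 0 1)) :=
    (memLp_rpow_Icc_zero_one hp0 hp (by linarith)).ofReal
  refine ⟨hg.toLp g, fun ⟨γ, _, hγ⟩ => ?_⟩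
  have hbound (φ : Lp ℂ ∞ (volume.restrict (Icc (0 : ℝ) 1))) :
      ‖∫ x, g x * (φ : ℝ → ℂ) x ∂(volume.restrict (Icc 0 1))‖ ≤
        γ * (eLpNorm (φ : ℝ → ℂ) 2 (volume.restrict (Icc 0 1))).toReal := by
    have hfg := integral_congr_ae (hg.coeFn_toLp.mul (ae_eq_refl (φ : ℝ → ℂ)))
    simp only [Pi.mul_apply] at hfg
    exact hfg ▸ hγ φ
  set ε := Real.exp (-(γ ^ 2 + 1))
  have hε : 0 < ε := Real.exp_pos _
  have hε1 : ε ≤ 1 := Real.exp_le_one_iff.2 (by nlinarith)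
  have key := setIntegral_norm_sq_le_of_norm_integral_mul_le hbound measurableSet_Icc
    (memLp_top_rpow_Icc (b := 1) hε (by norm_num : (-(1 / 2) : ℝ) ≤ 0)).ofReal
  rw [setIntegral_congr_fun measurableSet_Icc fun x hx => norm_rpow_neg_half_sq (hε.trans_le hx.1),
    setIntegral_Icc_inv hε hε1, Real.log_exp] at key
  linarith
end

section
/- Let ω be an almost clustering state on a quasi-local quasi *-algebra with ω ∈ D(x_∞) for some x ∈ A₀ (i.e. lim_N ω(x_N) exists, where x_N = (1/N)Σ_{j=1}^N τ_{g_j}(x)), and let b ∈ A₀ with ω(b*b) > 0. Then the local modification ω_b also belongs to D(x_∞) and ω_b(x_∞) = ω(x_∞). -/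
open scoped ComplexOrder

/-- A quasi *-algebra `(A, A₀)`: a complex vector space `A` with involution, a
distinguished *-subalgebra `A₀` (given as a subset), a unit `e ∈ A₀`, and a
partial multiplication `mul` (defined as a total map, but with the quasi *-algebra
axioms imposed only when one of the factors lies in `A₀`). -/
structure QuasiStarAlgebra (A : Type*) [AddCommGroup A] [Module ℂ A] [StarAddMonoid A]
    [StarModule ℂ A] where
  A0 : Set A
  mul : A → A → A
  e : A
  e_mem : e ∈ A0
  zero_mem : (0 : A) ∈ A0
  add_mem : ∀ x y, x ∈ A0 → y ∈ A0 → x + y ∈ A0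
  smul_mem : ∀ (c : ℂ) x, x ∈ A0 → c • x ∈ A0
  star_mem : ∀ x, x ∈ A0 → star x ∈ A0
  mul_mem : ∀ x y, x ∈ A0 → y ∈ A0 → mul x y ∈ A0
  mul_add_left : ∀ x ∈ A0, ∀ a b, mul x (a + b) = mul x a + mul x b
  mul_smul_left : ∀ x ∈ A0, ∀ (c : ℂ) a, mul x (c • a) = c • mul x a
  mul_add_right : ∀ x ∈ A0, ∀ a b, mul (a + b) x = mul a x + mul b x
  mul_smul_right : ∀ x ∈ A0, ∀ (c : ℂ) a, mul (c • a) x = c • mul a x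
  assoc_left : ∀ x ∈ A0, ∀ y ∈ A0, ∀ a, mul x (mul y a) = mul (mul x y) a
  assoc_right : ∀ x ∈ A0, ∀ y ∈ A0, ∀ a, mul (mul a x) y = mul a (mul x y)
  assoc_mid : ∀ x ∈ A0, ∀ y ∈ A0, ∀ a, mul (mul x a) y = mul x (mul a y)
  star_mul_left : ∀ x ∈ A0, ∀ a, star (mul x a) = mul (star a) (star x)
  star_mul_right : ∀ x ∈ A0, ∀ a, star (mul a x) = mul (star x) (star a)
  mul_e : ∀ a, mul a e = a
  e_mul : ∀ a, mul e a = a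

/-- A linear functional `ω` on a quasi *-algebra is *representable* if it satisfies
(L1) `ω(a* a) ≥ 0` for `a ∈ A₀`;
(L2) `ω(b* x* a) = conj (ω (a* x b))` for `a, b ∈ A₀`, `x ∈ A`;
(L3) for each `x ∈ A` there is `γ_x > 0` with `|ω(x* a)| ≤ γ_x ω(a* a)^{1/2}` for all `a ∈ A₀`. -/
def QuasiStarAlgebra.Representable {A : Type*} [AddCommGroup A] [Module ℂ A] [StarAddMonoid A]
    [StarModule ℂ A] (Q : QuasiStarAlgebra A) (ω : A →ₗ[ℂ] ℂ) : Prop :=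
  (∀ a ∈ Q.A0, 0 ≤ ω (Q.mul (star a) a)) ∧
  (∀ a ∈ Q.A0, ∀ b ∈ Q.A0, ∀ x : A,
      ω (Q.mul (Q.mul (star b) (star x)) a) =
        starRingEnd ℂ (ω (Q.mul (Q.mul (star a) x) b))) ∧
  (∀ x : A, ∃ γ : ℝ, 0 < γ ∧ ∀ a ∈ Q.A0,
      ‖ω (Q.mul (star x) a)‖ ≤ γ * Real.sqrt (ω (Q.mul (star a) a)).re)


/-- A function `f` on a quasi-local quasi *-algebra (with local net `Aα`, support map
`supp`, orthogonality `perp` and C*-norm `ν` on `A₀`) is almost clustering (AC) if for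
all `b ∈ A₀` and `ε > 0` there is `α ≥ supp b` such that `|f(ab) − f(a)f(b)| ≤ ε‖a‖‖b‖`
for all `γ ⊥ α` and `a ∈ A_γ`. -/
def AlmostClustering {A : Type*} [AddCommGroup A] [Module ℂ A] [StarAddMonoid A]
    [StarModule ℂ A] (Q : QuasiStarAlgebra A) {F : Type*} [Preorder F]
    (perp : F → F → Prop) (Aα : F → Set A) (supp : A → F) (ν : A → ℝ)
    (f : A → ℂ) : Prop :=
  ∀ b ∈ Q.A0, ∀ ε : ℝ, 0 < ε → ∃ α : F, supp b ≤ α ∧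
    ∀ γ : F, perp γ α → ∀ a ∈ Aα γ, ‖f (Q.mul a b) - f a * f b‖ ≤ ε * ν a * ν b


open Filter Topology

/-- let `ω` be an almost clustering state on a quasi-local quasi *-algebra
with `ω ∈ D(x_∞)` (i.e. `lim_N ω(x_N)` exists, `x_N = (1/N) Σ_{j=1}^N τ_{g_j}(x)`), and
`b ∈ A₀` with `ω(b*b) > 0`.  Then the local modification `ω_b` also belongs to `D(x_∞)`
and `ω_b(x_∞) = ω(x_∞)`. -/
theorem stmt_19 {A : Type*} [AddCommGroup A] [Module ℂ A] [StarAddMonoid A] [StarModule ℂ A]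
    (Q : QuasiStarAlgebra A) {F : Type*} [Preorder F]
    (perp : F → F → Prop) (Aα : F → Set A) (supp : A → F) (ν : A → ℝ)
    -- quasi-local structure
    (hdir : ∀ α β : F, ∃ δ : F, α ≤ δ ∧ β ≤ δ)
    (hmono : ∀ α β : F, α ≤ β → Aα α ⊆ Aα β)
    (hunion : Q.A0 = ⋃ α : F, Aα α)
    (hsupp : ∀ x ∈ Q.A0, x ∈ Aα (supp x))
    (hperp_mono : ∀ α β γ : F, α ≤ β → perp γ β → perp γ α)
    (hcomm : ∀ γ δ : F, perp γ δ → ∀ a ∈ Aα γ, ∀ x ∈ Aα δ, Q.mul a x = Q.mul x a)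
    -- the group `G` acting on the index set `F` and on `A₀` by isometric *-automorphisms
    {G : Type*} [Group G] (gact : G → F → F) (τ : G → A →ₗ[ℂ] A)
    (hcov : ∀ (g : G) (α : F), τ g '' (Aα α) = Aα (gact g α))
    (hτstar : ∀ g : G, ∀ x : A, τ g (star x) = star (τ g x))
    (hτiso : ∀ g : G, ∀ x ∈ Q.A0, ν (τ g x) = ν x)
    (hτA0 : ∀ g : G, ∀ x ∈ Q.A0, τ g x ∈ Q.A0)
    -- the sequence `(g_j)` moves every local region to orthogonal ones, eventually
    (g : ℕ → G)
    (hg : ∀ α : F, ∃ j0 : ℕ, ∀ j ≥ j0, perp (gact (g j) α) α)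
    -- the almost clustering state `ω` with `ω ∈ D(x_∞)`
    (ω : A →ₗ[ℂ] ℂ) (hω : Q.Representable ω) (hstate : ω Q.e = 1)
    (hbound : ∀ y ∈ Q.A0, ‖ω y‖ ≤ ν y)
    (hAC : AlmostClustering Q perp Aα supp ν (⇑ω))
    (x : A) (hx : x ∈ Q.A0) (L : ℂ)
    (hL : Tendsto
      (fun N : ℕ => ω (((N : ℂ))⁻¹ • ∑ j ∈ Finset.range N, τ (g (j + 1)) x))
      atTop (𝓝 L))
    -- the localizing element `b`
    (b : A) (hb : b ∈ Q.A0) (hbpos : 0 < (ω (Q.mul (star b) b)).re) :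
    Tendsto
      (fun N : ℕ =>
        ω (Q.mul (Q.mul (star b) (((N : ℂ))⁻¹ • ∑ j ∈ Finset.range N, τ (g (j + 1)) x)) b) /
          ω (Q.mul (star b) b))
      atTop (𝓝 L) := by
  classical
  set c := ω (Q.mul (star b) b) with hc
  have hcne : c ≠ 0 := by
    intro h
    rw [h] at hbpos
    simp at hbpos
  have hstarb : star b ∈ Q.A0 := Q.star_mem b hb
  have hb' : Q.mul (star b) b ∈ Q.A0 := Q.mul_mem _ _ hstarb hb
  have hνx : 0 ≤ ν x := le_trans (norm_nonneg _) (hbound x hx)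
  have hνb' : 0 ≤ ν (Q.mul (star b) b) := le_trans (norm_nonneg _) (hbound _ hb')
  -- the linear map z ↦ b* z b
  set T : A →ₗ[ℂ] A :=
    { toFun := fun z => Q.mul (Q.mul (star b) z) b
      map_add' := fun a1 a2 => by
        show Q.mul (Q.mul (star b) (a1 + a2)) b
            = Q.mul (Q.mul (star b) a1) b + Q.mul (Q.mul (star b) a2) b
        rw [Q.mul_add_left _ hstarb, Q.mul_add_right _ hb]
      map_smul' := fun m a => by
        show Q.mul (Q.mul (star b) (m • a)) b = m • Q.mul (Q.mul (star b) a) b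
        rw [Q.mul_smul_left _ hstarb, Q.mul_smul_right _ hb] } with hT
  set y : ℕ → A := fun j => τ (g (j + 1)) x with hy
  set f : ℕ → ℂ := fun j => ω (T (y j)) / c - ω (y j) with hf
  -- Step A : f → 0
  have hf0 : Tendsto f atTop (𝓝 0) := by
    rw [NormedAddCommGroup.tendsto_nhds_zero]
    intro ε hε
    set K := ν x * ν (Q.mul (star b) b) with hK
    have hK0 : 0 ≤ K := mul_nonneg hνx hνb'
    have hcn : 0 < ‖c‖ := norm_pos_iff.mpr hcne
    have hε' : 0 < ε * ‖c‖ / (2 * (K + 1)) := by positivity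
    obtain ⟨α, hα1, hα2⟩ := hAC (Q.mul (star b) b) hb' _ hε'
    obtain ⟨δ1, hδ11, hδ12⟩ := hdir (supp x) (supp b)
    obtain ⟨δ2, hδ21, hδ22⟩ := hdir δ1 (supp (star b))
    obtain ⟨δ3, h31, h32⟩ := hdir δ2 (supp (Q.mul (star b) b))
    obtain ⟨δ, hδ1, hδ2⟩ := hdir δ3 α
    have hxδ : x ∈ Aα δ :=
      hmono _ _ (le_trans hδ11 (le_trans hδ21 (le_trans h31 hδ1))) (hsupp x hx)
    have hsbδ : star b ∈ Aα δ :=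
      hmono _ _ (le_trans hδ22 (le_trans h31 hδ1)) (hsupp _ hstarb)
    obtain ⟨j0, hj0⟩ := hg δ
    filter_upwards [eventually_ge_atTop j0] with j hj
    have hperpδ : perp (gact (g (j + 1)) δ) δ := hj0 (j + 1) (le_trans hj (Nat.le_succ j))
    have hperpα : perp (gact (g (j + 1)) δ) α := hperp_mono α δ _ hδ2 hperpδ
    have hyγ : y j ∈ Aα (gact (g (j + 1)) δ) := by
      rw [← hcov]; exact ⟨x, hxδ, rfl⟩
    have hcom : Q.mul (y j) (star b) = Q.mul (star b) (y j) :=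
      hcomm _ _ hperpδ _ hyγ _ hsbδ
    have hre : T (y j) = Q.mul (y j) (Q.mul (star b) b) := by
      show Q.mul (Q.mul (star b) (y j)) b = _
      rw [← hcom, Q.assoc_right (star b) hstarb b hb]
    have hACj := hα2 _ hperpα _ hyγ
    have hν : ν (y j) = ν x := hτiso _ x hx
    rw [hν, ← hc] at hACj
    have hfj : f j = (ω (Q.mul (y j) (Q.mul (star b) b)) - ω (y j) * c) / c := by
      show ω (T (y j)) / c - ω (y j) = _
      rw [hre, sub_div, mul_div_assoc, div_self hcne, mul_one]
    rw [hfj, norm_div]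
    calc ‖ω (Q.mul (y j) (Q.mul (star b) b)) - ω (y j) * c‖ / ‖c‖
        ≤ (ε * ‖c‖ / (2 * (K + 1)) * ν x * ν (Q.mul (star b) b)) / ‖c‖ := by gcongr
      _ < ε := by
          rw [div_lt_iff₀ hcn, div_mul_eq_mul_div, div_mul_eq_mul_div,
            div_lt_iff₀ (by positivity)]
          nlinarith [mul_pos hε hcn]
  -- Step B : algebraic decomposition
  have hsum : ∀ N : ℕ,
      ω (Q.mul (Q.mul (star b) ((N : ℂ)⁻¹ • ∑ j ∈ Finset.range N, τ (g (j + 1)) x)) b) / c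
        = ((N : ℂ)⁻¹ * ∑ j ∈ Finset.range N, f j)
          + ω ((N : ℂ)⁻¹ • ∑ j ∈ Finset.range N, τ (g (j + 1)) x) := by
    intro N
    have e1 : Q.mul (Q.mul (star b) ((N : ℂ)⁻¹ • ∑ j ∈ Finset.range N, τ (g (j + 1)) x)) b
        = T ((N : ℂ)⁻¹ • ∑ j ∈ Finset.range N, y j) := rfl
    rw [e1, map_smul, map_smul, map_sum, map_sum, map_smul, map_sum]
    simp only [smul_eq_mul]
    rw [← mul_add, ← Finset.sum_add_distrib, mul_div_assoc, Finset.sum_div]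
    congr 1
    apply Finset.sum_congr rfl
    intro j _
    show ω (T (y j)) / c = (ω (T (y j)) / c - ω (y j)) + ω (y j)
    rw [sub_add_cancel]
  -- Step C : conclude
  have hcesaro : Tendsto (fun N : ℕ => (N : ℂ)⁻¹ * ∑ j ∈ Finset.range N, f j) atTop (𝓝 0) := by
    have h := hf0.cesaro_smul
    have heq : (fun n : ℕ => ((n : ℝ)⁻¹ : ℝ) • ∑ i ∈ Finset.range n, f i)
        = fun N : ℕ => (N : ℂ)⁻¹ * ∑ j ∈ Finset.range N, f j := by
      funext n
      rw [Complex.real_smul]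
      push_cast
      ring
    rwa [heq] at h
  have hfin := hcesaro.add hL
  rw [zero_add] at hfin
  exact hfin.congr (fun N => (hsum N).symm)
end
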